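/- arXiv:math/0007211 — 7 statements merged into one kernel-verified Lean document; each statement's English description precedes it below -/
import Mathlib

section
/- Let G be a profinite group generated by subgroups G₁, …, Gₙ. Suppose that for every finite group A, finite group B, epimorphisms α : G → B and β : A → B, and homomorphisms βᵢ : α(Gᵢ) → A with β ∘ βᵢ = id on α(Gᵢ) for each i, there exists a continuous homomorphism γ : G → A with β ∘ γ = α and γ restricted to Gᵢ equal to βᵢ ∘ α restricted to Gᵢ for each i. Then G is the free profinite product of G₁, …, Gₙ. -/
/-!
Extensions are built one finite quotient `H ⧸ N` of the target at a time. The maps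
`Gᵢ → H ⧸ N` factor as `γ̄ᵢ ∘ α` with `α : G → G ⧸ U` for a small open normal `U`, so
`b ↦ (b, γ̄ᵢ b)` splits the trivial extension `(G ⧸ U) × (H ⧸ N) → G ⧸ U` over each `α(Gᵢ)`;
the second coordinate of a locally exact solution extends the `Gᵢ → H ⧸ N` to `G`. As the `Gᵢ`
generate `G` topologically, such extensions are unique, hence compatible in `N`, and they glue
to a continuous homomorphism into `H = lim H ⧸ N`.
-/

/-- `G` together with the inclusions of the subgroups `Gs i` is the free profinite product
of the `Gs i`: every family of continuous homomorphisms from the `Gs i` into a profinite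
group `H` extends uniquely to a continuous homomorphism `G →* H`. -/
def IsFreeProfiniteProductOfSubgroups {G : Type u} [Group G] [TopologicalSpace G]
    {n : ℕ} (Gs : Fin n → Subgroup G) : Prop :=
  ∀ (H : Type u) (_ : Group H) (_ : TopologicalSpace H) (_ : IsTopologicalGroup H)
    (_ : CompactSpace H) (_ : T2Space H) (_ : TotallyDisconnectedSpace H)
    (γ : ∀ i, ↥(Gs i) →* H), (∀ i, Continuous (γ i)) →
      ∃! δ : G →* H, Continuous δ ∧ ∀ i, ∀ x : G, ∀ hx : x ∈ Gs i, δ x = γ i ⟨x, hx⟩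

theorem MonoidHom.continuous_of_isOpen_ker {G Q : Type*} [Group G] [TopologicalSpace G]
    [IsTopologicalGroup G] [Group Q] [TopologicalSpace Q] [DiscreteTopology Q] (f : G →* Q)
    (hf : IsOpen (f.ker : Set G)) : Continuous f := by
  refine continuous_of_continuousAt_one f ?_
  rw [ContinuousAt, map_one, nhds_discrete Q, Filter.tendsto_pure]
  exact hf.mem_nhds (map_one f)

theorem MonoidHom.ext_of_topologicalClosure_iSup_eq_top {G Q : Type*} [Group G]
    [TopologicalSpace G] [IsTopologicalGroup G] [Group Q] [TopologicalSpace Q] [T2Space Q]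
    {ι : Sort*} {Gs : ι → Subgroup G} (hgen : (⨆ i, Gs i).topologicalClosure = ⊤)
    {φ ψ : G →* Q} (hφ : Continuous φ) (hψ : Continuous ψ) (h : ∀ i, ∀ x ∈ Gs i, φ x = ψ x) :
    φ = ψ := by
  have hle : (⨆ i, Gs i).topologicalClosure ≤ φ.eqLocus ψ :=
    Subgroup.topologicalClosure_minimal _ (iSup_le h) (isClosed_eq hφ hψ)
  rw [hgen] at hle
  ext x
  exact hle (Subgroup.mem_top x)

theorem MonoidHom.exists_lift_subgroupMap {G B Q : Type*} [Group G] [Group B] [Group Q]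
    (α : G →* B) {K : Subgroup G} (f : K →* Q) (hf : α.ker.subgroupOf K ≤ f.ker) :
    ∃ f' : K.map α →* Q, ∀ x : K, f' (α.subgroupMap K x) = f x :=
  ⟨(α.subgroupMap K).liftOfSurjective (α.subgroupMap_surjective K)
      ⟨f, (Subgroup.ker_subgroupMap K α).trans_le hf⟩,
    fun x => MonoidHom.liftOfRightInverse_comp_apply _ _ _ _ x⟩

instance {H : Type*} [Group H] [TopologicalSpace H] : Nonempty (OpenNormalSubgroup H) :=
  ⟨{ toOpenSubgroup := ⊤, isNormal' := inferInstanceAs (⊤ : Subgroup H).Normal }⟩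

namespace OpenNormalSubgroup

variable {H : Type*} [Group H] [TopologicalSpace H] [IsTopologicalGroup H] [CompactSpace H]

theorem exists_subgroupOf_le_ker [TotallyDisconnectedSpace H] {ι Q : Type*} [Finite ι]
    [Group Q] [TopologicalSpace Q] [DiscreteTopology Q] {Ks : ι → Subgroup H}
    (f : ∀ i, Ks i →* Q) (hf : ∀ i, Continuous (f i)) :
    ∃ U : OpenNormalSubgroup H, ∀ i, U.toSubgroup.subgroupOf (Ks i) ≤ (f i).ker := by
  have hker : ∀ i, ∃ V : Set H, IsOpen V ∧ Subtype.val ⁻¹' V = ((f i).ker : Set (Ks i)) :=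
    fun i => isOpen_induced_iff.mp ((isOpen_discrete {1}).preimage (hf i))
  choose V hVopen hV using hker
  have h1V : (1 : H) ∈ ⋂ i, V i := Set.mem_iInter.mpr fun i => by
    change ((1 : Ks i) : H) ∈ V i
    rw [← Set.mem_preimage, hV i]
    exact (f i).ker.one_mem
  obtain ⟨U, hU⟩ :=
    ProfiniteGrp.exist_openNormalSubgroup_sub_open_nhds_of_one (isOpen_iInter_of_finite hVopen) h1V
  refine ⟨U, fun i x hx => ?_⟩
  have hxV : x ∈ Subtype.val ⁻¹' V i := Set.mem_iInter.mp (hU hx) i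
  rwa [hV i] at hxV

theorem eq_of_forall_mk_eq [TotallyDisconnectedSpace H] [T2Space H] {a b : H}
    (h : ∀ N : OpenNormalSubgroup H, (a : H ⧸ N.toSubgroup) = b) : a = b := by
  by_contra hne
  have h1 : (1 : H) ∈ ({a⁻¹ * b}ᶜ : Set H) := fun h1 => hne (inv_mul_eq_one.mp h1.symm)
  obtain ⟨N, hN⟩ :=
    ProfiniteGrp.exist_openNormalSubgroup_sub_open_nhds_of_one isOpen_compl_singleton h1
  exact hN (QuotientGroup.eq.mp (h N)) rfl

theorem exists_mk_eq_of_compatible (x : ∀ N : OpenNormalSubgroup H, H ⧸ N.toSubgroup)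
    (hx : ∀ (N M : OpenNormalSubgroup H) (hNM : N ≤ M),
      QuotientGroup.map _ _ (MonoidHom.id H) hNM (x N) = x M) :
    ∃ a : H, ∀ N, (a : H ⧸ N.toSubgroup) = x N := by
  let t : OpenNormalSubgroup H → Set H := fun N => QuotientGroup.mk ⁻¹' {x N}
  have ht_closed : ∀ N, IsClosed (t N) :=
    fun N => (isClosed_discrete _).preimage QuotientGroup.continuous_mk
  have ht_directed : Directed (· ⊇ ·) t := by
    intro N M
    refine ⟨N ⊓ M, fun a ha => ?_, fun a ha => ?_⟩
    · rw [Set.mem_preimage, Set.mem_singleton_iff, ← hx _ N inf_le_left, ← ha]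
      rfl
    · rw [Set.mem_preimage, Set.mem_singleton_iff, ← hx _ M inf_le_right, ← ha]
      rfl
  obtain ⟨a, ha⟩ := IsCompact.nonempty_iInter_of_directed_nonempty_isCompact_isClosed t
    ht_directed (fun N => QuotientGroup.mk_surjective (x N)) (fun N => (ht_closed N).isCompact)
    ht_closed
  exact ⟨a, Set.mem_iInter.mp ha⟩

theorem exists_continuous_lift_of_compatible [TotallyDisconnectedSpace H] [T2Space H]
    {G : Type*} [Group G] [TopologicalSpace G] [IsTopologicalGroup G]
    (δ : ∀ N : OpenNormalSubgroup H, G →* H ⧸ N.toSubgroup) (hδ : ∀ N, Continuous (δ N))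
    (hcompat : ∀ (N M : OpenNormalSubgroup H) (hNM : N ≤ M),
      (QuotientGroup.map _ _ (MonoidHom.id H) hNM).comp (δ N) = δ M) :
    ∃ φ : G →* H, Continuous φ ∧ ∀ N g, (φ g : H ⧸ N.toSubgroup) = δ N g := by
  choose φ hφ using fun g => exists_mk_eq_of_compatible (fun N => δ N g)
    (fun N M hNM => DFunLike.congr_fun (hcompat N M hNM) g)
  let φ' : G →* H :=
    { toFun := φ
      map_one' := eq_of_forall_mk_eq fun N => by rw [hφ, map_one]; rfl
      map_mul' := fun a b => eq_of_forall_mk_eq fun N => by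
        rw [QuotientGroup.mk_mul, hφ, hφ, hφ, map_mul] }
  refine ⟨φ', continuous_of_continuousAt_one φ' ?_, fun N g => hφ g N⟩
  rw [ContinuousAt, map_one]
  intro V hV
  obtain ⟨W, hWV, hWopen, h1W⟩ := mem_nhds_iff.mp hV
  obtain ⟨N, hN⟩ := ProfiniteGrp.exist_openNormalSubgroup_sub_open_nhds_of_one hWopen h1W
  have hker : IsOpen ((δ N).ker : Set G) := (isOpen_discrete {1}).preimage (hδ N)
  refine Filter.mem_map.mpr <|
    Filter.mem_of_superset (hker.mem_nhds (δ N).ker.one_mem) fun g hg => hWV (hN ?_)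
  exact (QuotientGroup.eq_one_iff _).mp ((hφ g N).trans hg)

end OpenNormalSubgroup

def SolvesFiniteLocallySplitEmbeddingProblems {G : Type u} [Group G] [TopologicalSpace G]
    {n : ℕ} (Gs : Fin n → Subgroup G) : Prop :=
  ∀ (A B : Type u) (_ : Group A) (_ : Group B) (_ : Finite A) (_ : Finite B)
      (α : G →* B) (β : A →* B) (βi : ∀ i, ↥((Gs i).map α) →* A),
      Function.Surjective α → IsOpen ((α.ker : Subgroup G) : Set G) →
      Function.Surjective β →
      (∀ i, ∀ b : ↥((Gs i).map α), β (βi i b) = (b : B)) →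
      ∃ γ : G →* A, IsOpen ((γ.ker : Subgroup G) : Set G) ∧ (∀ g, β (γ g) = α g) ∧
        ∀ i, ∀ g : G, ∀ hg : g ∈ Gs i,
          γ g = βi i ⟨α g, Subgroup.mem_map_of_mem α hg⟩

theorem SolvesFiniteLocallySplitEmbeddingProblems.exists_continuous_extension {G : Type u}
    [Group G] [TopologicalSpace G] [IsTopologicalGroup G] [CompactSpace G]
    [TotallyDisconnectedSpace G] {n : ℕ} {Gs : Fin n → Subgroup G}
    (hEP : SolvesFiniteLocallySplitEmbeddingProblems Gs) {Q : Type u} [Group Q] [Finite Q]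
    [TopologicalSpace Q] [DiscreteTopology Q] (f : ∀ i, Gs i →* Q) (hf : ∀ i, Continuous (f i)) :
    ∃ δ : G →* Q, Continuous δ ∧ ∀ i, ∀ x (hx : x ∈ Gs i), δ x = f i ⟨x, hx⟩ := by
  obtain ⟨U, hU⟩ := OpenNormalSubgroup.exists_subgroupOf_le_ker f hf
  let α := QuotientGroup.mk' U.toSubgroup
  choose f' hf' using fun i => α.exists_lift_subgroupMap (f i)
    (by rw [QuotientGroup.ker_mk']; exact hU i)
  obtain ⟨γ, hγ, -, hγGs⟩ := hEP ((G ⧸ U.toSubgroup) × Q) (G ⧸ U.toSubgroup) inferInstance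
    inferInstance inferInstance inferInstance α (MonoidHom.fst _ _)
    (fun i => ((Gs i).map α).subtype.prod (f' i)) (QuotientGroup.mk'_surjective _)
    (by rw [QuotientGroup.ker_mk']; exact U.isOpen) Prod.fst_surjective (fun _ _ => rfl)
  refine ⟨(MonoidHom.snd _ _).comp γ, continuous_snd.comp (γ.continuous_of_isOpen_ker hγ),
    fun i x hx => ?_⟩
  rw [MonoidHom.comp_apply, hγGs i x hx]
  exact hf' i ⟨x, hx⟩

theorem stmt0_general {G : Type u} [Group G] [TopologicalSpace G] [IsTopologicalGroup G]
    [CompactSpace G] [TotallyDisconnectedSpace G]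
    {n : ℕ} (Gs : Fin n → Subgroup G)
    (hgen : (⨆ i, Gs i).topologicalClosure = ⊤)
    -- every finite locally split embedding problem has a locally exact solution:
    (hEP : ∀ (A B : Type u) (_ : Group A) (_ : Group B) (_ : Finite A) (_ : Finite B)
      (α : G →* B) (β : A →* B) (βi : ∀ i, ↥((Gs i).map α) →* A),
      Function.Surjective α → IsOpen ((α.ker : Subgroup G) : Set G) →
      Function.Surjective β →
      (∀ i, ∀ b : ↥((Gs i).map α), β (βi i b) = (b : B)) →
      ∃ γ : G →* A, IsOpen ((γ.ker : Subgroup G) : Set G) ∧ (∀ g, β (γ g) = α g) ∧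
        ∀ i, ∀ g : G, ∀ hg : g ∈ Gs i,
          γ g = βi i ⟨α g, Subgroup.mem_map_of_mem α hg⟩) :
    IsFreeProfiniteProductOfSubgroups Gs := by
  intro H _ _ _ _ _ _ γ hγ
  have hEP' : SolvesFiniteLocallySplitEmbeddingProblems Gs := hEP
  choose δ hδ_cont hδ using fun N : OpenNormalSubgroup H =>
    hEP'.exists_continuous_extension (fun i => (QuotientGroup.mk' N.toSubgroup).comp (γ i))
      fun i => QuotientGroup.continuous_mk.comp (hγ i)
  have hcompat : ∀ (N M : OpenNormalSubgroup H) (hNM : N ≤ M),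
      (QuotientGroup.map _ _ (MonoidHom.id H) hNM).comp (δ N) = δ M := fun N M hNM =>
    MonoidHom.ext_of_topologicalClosure_iSup_eq_top hgen
      ((continuous_of_discreteTopology (f := QuotientGroup.map _ _ _ hNM)).comp (hδ_cont N))
      (hδ_cont M) fun i x hx => by
        rw [MonoidHom.comp_apply, hδ N i x hx, hδ M i x hx]
        rfl
  obtain ⟨φ, hφ_cont, hφ⟩ :=
    OpenNormalSubgroup.exists_continuous_lift_of_compatible δ hδ_cont hcompat
  have hφGs : ∀ i, ∀ x (hx : x ∈ Gs i), φ x = γ i ⟨x, hx⟩ := fun i x hx =>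
    OpenNormalSubgroup.eq_of_forall_mk_eq fun N => (hφ N x).trans (hδ N i x hx)
  refine ⟨φ, ⟨hφ_cont, hφGs⟩, fun ψ ⟨hψ_cont, hψGs⟩ =>
    MonoidHom.ext_of_topologicalClosure_iSup_eq_top hgen hψ_cont hφ_cont fun i x hx => ?_⟩
  rw [hψGs i x hx, hφGs i x hx]

theorem stmt0 {G : Type u} [Group G] [TopologicalSpace G] [IsTopologicalGroup G]
    [CompactSpace G] [T2Space G] [TotallyDisconnectedSpace G]
    {n : ℕ} (Gs : Fin n → Subgroup G)
    (hgen : (⨆ i, Gs i).topologicalClosure = ⊤)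
    -- every finite locally split embedding problem has a locally exact solution:
    (hEP : ∀ (A B : Type u) (_ : Group A) (_ : Group B) (_ : Finite A) (_ : Finite B)
      (α : G →* B) (β : A →* B) (βi : ∀ i, ↥((Gs i).map α) →* A),
      Function.Surjective α → IsOpen ((α.ker : Subgroup G) : Set G) →
      Function.Surjective β →
      (∀ i, ∀ b : ↥((Gs i).map α), β (βi i b) = (b : B)) →
      ∃ γ : G →* A, IsOpen ((γ.ker : Subgroup G) : Set G) ∧ (∀ g, β (γ g) = α g) ∧
        ∀ i, ∀ g : G, ∀ hg : g ∈ Gs i,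
          γ g = βi i ⟨α g, Subgroup.mem_map_of_mem α hg⟩) :
    IsFreeProfiniteProductOfSubgroups Gs :=
  stmt0_general Gs hgen hEP
end

section
/- Let G be a profinite group with subgroups G₁, …, Gₙ such that G is projective relative to G₁, …, Gₙ. Then every embedding problem α : G → B, β : A → B (A, B profinite, α, β epimorphisms) admitting, for each i, a 'local' solution γᵢ : Gᵢ → A with α|Gᵢ = β ∘ γᵢ, has a 'global' solution γ : G → A with α = β ∘ γ. -/
/-!
Pull the embedding problem back along `α`. The fibre product `A ×_B G` is a closed subgroup of
`A × G`, hence profinite, and its projection to `G` is onto because `β` is. A local solution `γᵢ`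
gives the local section `x ↦ (γᵢ x, x)` of this projection, so relative projectivity provides a
global section `ρ`, and `γ := fst ∘ ρ` solves the embedding problem.
-/

/-- A profinite group `G` is projective relative to subgroups `Gs i`: every continuous
epimorphism `π : H ↠ G` of profinite groups which splits locally over each `Gs i`
splits globally. -/
def RelativelyProjective {G : Type u} [Group G] [TopologicalSpace G]
    {n : ℕ} (Gs : Fin n → Subgroup G) : Prop :=
  ∀ (H : Type u) (_ : Group H) (_ : TopologicalSpace H) (_ : IsTopologicalGroup H)
    (_ : CompactSpace H) (_ : T2Space H) (_ : TotallyDisconnectedSpace H)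
    (π : H →* G), Continuous π → Function.Surjective π →
    (∀ i, ∃ ρi : ↥(Gs i) →* H, Continuous ρi ∧ ∀ x : ↥(Gs i), π (ρi x) = (x : G)) →
    ∃ ρ : G →* H, Continuous ρ ∧ ∀ g : G, π (ρ g) = g

section FibreProduct

variable {A B G : Type*} [Group A] [Group B] [Group G]

/-- The fibre product `A ×_B G = {(a, g) | β a = α g}`. -/
def fibreProduct (β : A →* B) (α : G →* B) : Subgroup (A × G) :=
  (β.comp (MonoidHom.fst A G)).eqLocus (α.comp (MonoidHom.snd A G))

namespace fibreProduct

variable (β : A →* B) (α : G →* B)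

def fst : fibreProduct β α →* A := (MonoidHom.fst A G).comp (fibreProduct β α).subtype

def snd : fibreProduct β α →* G := (MonoidHom.snd A G).comp (fibreProduct β α).subtype

theorem map_fst_eq_map_snd (p : fibreProduct β α) : β (fst β α p) = α (snd β α p) := p.2

variable {β α}

theorem snd_surjective (hβs : Function.Surjective β) : Function.Surjective (snd β α) := by
  intro g
  obtain ⟨a, ha⟩ := hβs (α g)
  exact ⟨⟨(a, g), ha⟩, rfl⟩

def lift {K : Type*} [Group K] (γ : K →* A) (φ : K →* G) (h : ∀ x, β (γ x) = α (φ x)) :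
    K →* fibreProduct β α :=
  (γ.prod φ).codRestrict _ h

variable [TopologicalSpace A] [TopologicalSpace G]

theorem isClosed [TopologicalSpace B] [T2Space B] (hβ : Continuous β) (hα : Continuous α) :
    IsClosed (fibreProduct β α : Set (A × G)) :=
  isClosed_eq (hβ.comp continuous_fst) (hα.comp continuous_snd)

theorem continuous_fst : Continuous (fst β α) :=
  continuous_subtype_val.fst

theorem continuous_snd : Continuous (snd β α) :=
  continuous_subtype_val.snd

theorem continuous_lift {K : Type*} [Group K] [TopologicalSpace K] {γ : K →* A} {φ : K →* G}
    (hγ : Continuous γ) (hφ : Continuous φ) (h : ∀ x, β (γ x) = α (φ x)) :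
    Continuous (lift γ φ h) :=
  (hγ.prodMk hφ).subtype_mk _

end fibreProduct

end FibreProduct

theorem stmt2_general {G : Type u} [Group G] [TopologicalSpace G] [IsTopologicalGroup G]
    [CompactSpace G] [T2Space G] [TotallyDisconnectedSpace G]
    {n : ℕ} (Gs : Fin n → Subgroup G)
    (hproj : RelativelyProjective Gs)
    -- an embedding problem given by profinite `A`, `B`:
    (A B : Type u) [Group A] [Group B]
    [TopologicalSpace A] [IsTopologicalGroup A] [CompactSpace A] [T2Space A]
    [TotallyDisconnectedSpace A]
    [TopologicalSpace B] [T2Space B]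
    (α : G →* B) (β : A →* B) (hα : Continuous α)
    (hβ : Continuous β) (hβs : Function.Surjective β)
    -- local solutions on each `Gs i`:
    (hloc : ∀ i, ∃ γi : ↥(Gs i) →* A, Continuous γi ∧
      ∀ x : ↥(Gs i), β (γi x) = α (x : G)) :
    -- global solution:
    ∃ γ : G →* A, Continuous γ ∧ ∀ g : G, β (γ g) = α g := by
  have : CompactSpace (fibreProduct β α) :=
    isCompact_iff_compactSpace.mp (fibreProduct.isClosed hβ hα).isCompact
  have hlocal : ∀ i, ∃ ρi : Gs i →* fibreProduct β α, Continuous ρi ∧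
      ∀ x : Gs i, fibreProduct.snd β α (ρi x) = x := fun i => by
    obtain ⟨γi, hγi, hγiα⟩ := hloc i
    exact ⟨fibreProduct.lift γi (Gs i).subtype hγiα,
      fibreProduct.continuous_lift hγi continuous_subtype_val hγiα, fun _ => rfl⟩
  obtain ⟨ρ, hρ, hρsnd⟩ := hproj (fibreProduct β α) inferInstance inferInstance inferInstance
    inferInstance inferInstance inferInstance (fibreProduct.snd β α) fibreProduct.continuous_snd
    (fibreProduct.snd_surjective hβs) hlocal
  refine ⟨(fibreProduct.fst β α).comp ρ, fibreProduct.continuous_fst.comp hρ, fun g => ?_⟩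
  simpa only [MonoidHom.comp_apply, hρsnd] using fibreProduct.map_fst_eq_map_snd β α (ρ g)

theorem stmt2 {G : Type u} [Group G] [TopologicalSpace G] [IsTopologicalGroup G]
    [CompactSpace G] [T2Space G] [TotallyDisconnectedSpace G]
    {n : ℕ} (Gs : Fin n → Subgroup G)
    (hproj : RelativelyProjective Gs)
    -- an embedding problem given by profinite `A`, `B`:
    (A B : Type u) [Group A] [Group B]
    [TopologicalSpace A] [IsTopologicalGroup A] [CompactSpace A] [T2Space A]
    [TotallyDisconnectedSpace A]
    [TopologicalSpace B] [IsTopologicalGroup B] [CompactSpace B] [T2Space B]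
    [TotallyDisconnectedSpace B]
    (α : G →* B) (β : A →* B) (hα : Continuous α) (hαs : Function.Surjective α)
    (hβ : Continuous β) (hβs : Function.Surjective β)
    -- local solutions on each `Gs i`:
    (hloc : ∀ i, ∃ γi : ↥(Gs i) →* A, Continuous γi ∧
      ∀ x : ↥(Gs i), β (γi x) = α (x : G)) :
    -- global solution:
    ∃ γ : G →* A, Continuous γ ∧ ∀ g : G, β (γ g) = α g :=
  stmt2_general Gs hproj A B α β hα hβ hβs hloc
end

section
/- Let G₁ * ⋯ * Gₙ denote the free profinite product and let 1 ≤ i < j ≤ n. Then any conjugate of the canonical image of Gᵢ intersects any conjugate of the canonical image of Gⱼ trivially. (Proof via the canonical homomorphism G₁ * ⋯ * Gₙ → G₁ × ⋯ × Gₙ is not sufficient; one uses that under strong relative projectivity of the free product the images are separated.) -/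
/-- `G` together with the embeddings `ε i : Gf i →* G` is the free profinite product of the
profinite groups `Gf i`: every family of continuous homomorphisms into a profinite group
factors uniquely through `G`. -/
def IsFreeProfiniteProduct {n : ℕ} (Gf : Fin n → Type u)
    [∀ i, Group (Gf i)] [∀ i, TopologicalSpace (Gf i)]
    (G : Type u) [Group G] [TopologicalSpace G] (ε : ∀ i, Gf i →* G) : Prop :=
  (∀ i, Continuous (ε i)) ∧ (∀ i, Function.Injective (ε i)) ∧
  ∀ (H : Type u) (_ : Group H) (_ : TopologicalSpace H) (_ : IsTopologicalGroup H)
    (_ : CompactSpace H) (_ : T2Space H) (_ : TotallyDisconnectedSpace H)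
    (γ : ∀ i, Gf i →* H), (∀ i, Continuous (γ i)) →
      ∃! δ : G →* H, Continuous δ ∧ ∀ i, δ.comp (ε i) = γ i

theorem IsFreeProfiniteProduct.exists_hom_pi {n : ℕ} {Gf : Fin n → Type u}
    [∀ i, Group (Gf i)] [∀ i, TopologicalSpace (Gf i)]
    [∀ i, IsTopologicalGroup (Gf i)] [∀ i, CompactSpace (Gf i)] [∀ i, T2Space (Gf i)]
    [∀ i, TotallyDisconnectedSpace (Gf i)]
    {G : Type u} [Group G] [TopologicalSpace G] {ε : ∀ i, Gf i →* G}
    (hfree : IsFreeProfiniteProduct Gf G ε) :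
    ∃ π : G →* ∀ i, Gf i, ∀ i y, π (ε i y) = Pi.mulSingle i y := by
  obtain ⟨π, ⟨-, hπ⟩, -⟩ := hfree.2.2 (∀ i, Gf i) inferInstance inferInstance inferInstance
    inferInstance inferInstance inferInstance (MonoidHom.mulSingle Gf) continuous_mulSingle
  exact ⟨π, fun i y => DFunLike.congr_fun (hπ i) y⟩

theorem stmt4_general {n : ℕ} (Gf : Fin n → Type u)
    [∀ i, Group (Gf i)] [∀ i, TopologicalSpace (Gf i)]
    [∀ i, IsTopologicalGroup (Gf i)] [∀ i, CompactSpace (Gf i)] [∀ i, T2Space (Gf i)]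
    [∀ i, TotallyDisconnectedSpace (Gf i)]
    (G : Type u) [Group G] [TopologicalSpace G]
    (ε : ∀ i, Gf i →* G) (hfree : IsFreeProfiniteProduct Gf G ε)
    (i j : Fin n) (hij : i ≠ j) (a b x : G)
    (hi : ∃ y : Gf i, x = a * ε i y * a⁻¹)
    (hj : ∃ z : Gf j, x = b * ε j z * b⁻¹) :
    x = 1 := by
  obtain ⟨π, hπ⟩ := hfree.exists_hom_pi
  obtain ⟨y, rfl⟩ := hi
  obtain ⟨z, hz⟩ := hj
  -- the `i`-th coordinate of `π x` is a conjugate of `y`, and it is `1` because `j ≠ i`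
  have hy : π a i * y * (π a i)⁻¹ = 1 := by
    simpa [hπ, Pi.mulSingle_eq_of_ne hij] using congrFun (congrArg π hz) i
  rw [conj_eq_one_iff.mp hy, map_one, mul_one, mul_inv_cancel]

theorem stmt4 {n : ℕ} (Gf : Fin n → Type u)
    [∀ i, Group (Gf i)] [∀ i, TopologicalSpace (Gf i)]
    [∀ i, IsTopologicalGroup (Gf i)] [∀ i, CompactSpace (Gf i)] [∀ i, T2Space (Gf i)]
    [∀ i, TotallyDisconnectedSpace (Gf i)]
    (G : Type u) [Group G] [TopologicalSpace G] [IsTopologicalGroup G]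
    [CompactSpace G] [T2Space G] [TotallyDisconnectedSpace G]
    (ε : ∀ i, Gf i →* G) (hfree : IsFreeProfiniteProduct Gf G ε)
    (i j : Fin n) (hij : i ≠ j) (a b x : G)
    (hi : ∃ y : Gf i, x = a * ε i y * a⁻¹)
    (hj : ∃ z : Gf j, x = b * ε j z * b⁻¹) :
    x = 1 :=
  stmt4_general Gf G ε hfree i j hij a b x hi hj
end

section
/- Two valuations v and w on a field F are independent (i.e., both non-trivial and F is generated as a ring by the valuation rings O_v and O_w) if and only if for every γ in the value group Γ_v there exists x ∈ F with v(x) > γ and w(x) < 0. -/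
/-!
If `F` is generated by `O_v` and `O_w`, write `(y s t⁻¹)⁻¹` as a polynomial expression in
elements of `O_v ∪ O_w`; the ultrametric inequality bounds its `v`-value by that of a single
`b ∈ O_w`, and `x = b⁻¹ t` works, where `v s < 1 < w t`. Conversely, if `v x < v a⁻¹` and
`1 < w x`, then `a = (x a) x⁻¹` with `x a ∈ O_v` and `x⁻¹ ∈ O_w`.
-/

/-- Two (multiplicatively written) valuations on a field `F` are independent:
both are non-trivial and `F` is generated as a ring by their valuation rings. -/
def Valuation.IndependentVal {F : Type*} [Field F]
    {Γ₁ Γ₂ : Type*} [LinearOrderedCommGroupWithZero Γ₁] [LinearOrderedCommGroupWithZero Γ₂]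
    (v : Valuation F Γ₁) (w : Valuation F Γ₂) : Prop :=
  (∃ x : F, x ≠ 0 ∧ v x ≠ 1) ∧ (∃ x : F, x ≠ 0 ∧ w x ≠ 1) ∧
    Subring.closure ((v.integer : Set F) ∪ (w.integer : Set F)) = ⊤

namespace Valuation

variable {F : Type*} [Field F] {Γ₁ Γ₂ : Type*}
  [LinearOrderedCommGroupWithZero Γ₁] [LinearOrderedCommGroupWithZero Γ₂]

theorem isNontrivial_iff_exists_ne_zero_ne_one (v : Valuation F Γ₁) :
    v.IsNontrivial ↔ ∃ x : F, x ≠ 0 ∧ v x ≠ 1 :=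
  ⟨fun ⟨x, hx0, hx1⟩ ↦ ⟨x, v.ne_zero_iff.1 hx0, hx1⟩,
    fun ⟨x, hx0, hx1⟩ ↦ ⟨x, v.ne_zero_iff.2 hx0, hx1⟩⟩

theorem exists_integer_le_of_mem_closure_integer_union {R : Type*} [Ring R]
    (v : Valuation R Γ₁) (w : Valuation R Γ₂) {z : R}
    (hz : z ∈ Subring.closure ((v.integer : Set R) ∪ (w.integer : Set R))) :
    ∃ b ∈ w.integer, v z ≤ v b := by
  induction hz using Subring.closure_induction with
  | mem x hx =>
    rcases hx with hx | hx
    · exact ⟨1, w.integer.one_mem, by rwa [map_one]⟩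
    · exact ⟨x, hx, le_rfl⟩
  | zero => exact ⟨1, w.integer.one_mem, by simp⟩
  | one => exact ⟨1, w.integer.one_mem, le_rfl⟩
  | add x y _ _ ihx ihy =>
    obtain ⟨b₁, hb₁, hxb₁⟩ := ihx
    obtain ⟨b₂, hb₂, hyb₂⟩ := ihy
    rcases le_total (v b₁) (v b₂) with h | h
    · exact ⟨b₂, hb₂, (v.map_add x y).trans (max_le (hxb₁.trans h) hyb₂)⟩
    · exact ⟨b₁, hb₁, (v.map_add x y).trans (max_le hxb₁ (hyb₂.trans h))⟩
  | neg x _ ih =>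
    obtain ⟨b, hb, hxb⟩ := ih
    exact ⟨b, hb, by rwa [map_neg]⟩
  | mul x y _ _ ihx ihy =>
    obtain ⟨b₁, hb₁, hxb₁⟩ := ihx
    obtain ⟨b₂, hb₂, hyb₂⟩ := ihy
    refine ⟨b₁ * b₂, w.integer.mul_mem hb₁ hb₂, ?_⟩
    simpa only [map_mul] using mul_le_mul' hxb₁ hyb₂

theorem exists_le_and_one_le_of_closure_integer_union_eq_top
    {v : Valuation F Γ₁} {w : Valuation F Γ₂}
    (h : Subring.closure ((v.integer : Set F) ∪ (w.integer : Set F)) = ⊤)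
    {y : F} (hy : y ≠ 0) :
    ∃ x : F, v x ≤ v y ∧ 1 ≤ w x := by
  obtain ⟨b, hb, hyb⟩ := exists_integer_le_of_mem_closure_integer_union v w
    (h ▸ Subring.mem_top y⁻¹)
  have hb0 : b ≠ 0 := by
    rintro rfl
    simp [hy] at hyb
  refine ⟨b⁻¹, ?_, ?_⟩
  · rw [map_inv₀] at hyb ⊢
    exact inv_le_of_inv_le₀ (v.pos_iff.2 hy) hyb
  · rw [map_inv₀]
    exact one_le_inv₀ (w.pos_iff.2 hb0) |>.2 hb

theorem IndependentVal.exists_lt_and_one_lt {v : Valuation F Γ₁} {w : Valuation F Γ₂}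
    (h : v.IndependentVal w) {y : F} (hy : y ≠ 0) :
    ∃ x : F, v x < v y ∧ 1 < w x := by
  obtain ⟨hv, hw, hcl⟩ := h
  obtain ⟨s, hs0, hs⟩ := (v.isNontrivial_iff_exists_lt_one).1
    ((v.isNontrivial_iff_exists_ne_zero_ne_one).2 hv)
  obtain ⟨t, ht⟩ := IsNontrivial_iff_exists_one_lt.1
    ((w.isNontrivial_iff_exists_ne_zero_ne_one).2 hw)
  have ht0 : t ≠ 0 := by
    rintro rfl
    simp at ht
  obtain ⟨x, hxv, hxw⟩ :=
    exists_le_and_one_le_of_closure_integer_union_eq_top hcl (by simp [hy, hs0, ht0] :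
      y * s * t⁻¹ ≠ 0)
  refine ⟨x * t, ?_, ?_⟩
  · calc v (x * t) ≤ v (y * s * t⁻¹) * v t := by rw [map_mul]; gcongr
      _ = v y * v s := by
        rw [map_mul, map_inv₀, inv_mul_cancel_right₀ (v.ne_zero_iff.2 ht0), map_mul]
      _ < v y := mul_lt_of_lt_one_right (v.pos_iff.2 hy) hs
  · calc (1 : Γ₂) < 1 * w t := by rwa [one_mul]
      _ ≤ w (x * t) := by rw [map_mul]; gcongr

theorem independentVal_of_forall_exists_lt_and_one_lt
    {v : Valuation F Γ₁} {w : Valuation F Γ₂}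
    (h : ∀ y : F, y ≠ 0 → ∃ x : F, v x < v y ∧ 1 < w x) : v.IndependentVal w := by
  have ne_zero_of_one_lt {x : F} (hx : 1 < w x) : x ≠ 0 := by
    rintro rfl
    simp at hx
  obtain ⟨x₁, hvx₁, hwx₁⟩ := h 1 one_ne_zero
  rw [map_one] at hvx₁
  have hx₁ := ne_zero_of_one_lt hwx₁
  refine ⟨⟨x₁, hx₁, hvx₁.ne⟩, ⟨x₁, hx₁, hwx₁.ne'⟩, eq_top_iff.2 ?_⟩
  rintro a -
  rcases eq_or_ne a 0 with rfl | ha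
  · exact Subring.zero_mem _
  obtain ⟨x, hvx, hwx⟩ := h a⁻¹ (inv_ne_zero ha)
  have hxa : x * a ∈ v.integer := by
    rw [mem_integer_iff, map_mul]
    calc v x * v a ≤ v a⁻¹ * v a := by gcongr
      _ = 1 := by rw [map_inv₀, inv_mul_cancel₀ (v.ne_zero_iff.2 ha)]
  have hx_inv : x⁻¹ ∈ w.integer := by
    rw [mem_integer_iff, map_inv₀]
    exact inv_le_one_of_one_le₀ hwx.le
  rw [show a = x * a * x⁻¹ by field_simp [ne_zero_of_one_lt hwx]]
  exact Subring.mul_mem _ (Subring.subset_closure (Or.inl hxa))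
    (Subring.subset_closure (Or.inr hx_inv))

end Valuation

/-- Independence is equivalent to: for every element `γ = v y` of the value group of `v`
there is `x` with `v x > γ` and `w x < 0` (in additive notation; multiplicatively
`v x < v y` and `w x > 1`). -/
theorem stmt5 {F : Type*} [Field F]
    {Γ₁ Γ₂ : Type*} [LinearOrderedCommGroupWithZero Γ₁] [LinearOrderedCommGroupWithZero Γ₂]
    (v : Valuation F Γ₁) (w : Valuation F Γ₂) :
    v.IndependentVal w ↔ ∀ y : F, y ≠ 0 → ∃ x : F, v x < v y ∧ 1 < w x :=
  ⟨fun h _ hy ↦ h.exists_lt_and_one_lt hy,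
    Valuation.independentVal_of_forall_exists_lt_and_one_lt⟩
end

section
/- Let v₁, …, vₙ be pairwise independent valuations on a field F, and let (F', v'₁, …, v'ₙ) be an extension of n-fold valued fields such that for each i the value group Γ_{vᵢ} is cofinal in Γ_{v'ᵢ} (for every γ ∈ Γ_{v'ᵢ} there is δ ∈ Γ_{vᵢ} with δ ≥ γ). Then v'₁, …, v'ₙ are pairwise independent on F'. -/
/-!
The valuation rings of `v` and `w` generate the field iff every element is `v`-dominated by some
element of the valuation ring of `w`. Given `z` in the extension, cofinality yields `y` in the base field with
`v' z ≤ v y⁻¹`, and the property in the base field dominates `y⁻¹` by an element of `O_w`.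
-/

namespace Valuation

section Domination

variable {F : Type*} [Field F] {Γ₁ Γ₂ : Type*}
  [LinearOrderedCommGroupWithZero Γ₁] [LinearOrderedCommGroupWithZero Γ₂]
  (v : Valuation F Γ₁) (w : Valuation F Γ₂)

theorem exists_mem_integer_le_of_mem_closure {z : F}
    (hz : z ∈ Subring.closure ((v.integer : Set F) ∪ (w.integer : Set F))) :
    ∃ b ∈ w.integer, v z ≤ v b := by
  induction hz using Subring.closure_induction with
  | mem x hx =>
    rcases hx with hx | hx
    · exact ⟨1, w.integer.one_mem, by simpa using (v.mem_integer_iff x).1 hx⟩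
    · exact ⟨x, hx, le_rfl⟩
  | zero => exact ⟨0, w.integer.zero_mem, le_rfl⟩
  | one => exact ⟨1, w.integer.one_mem, le_rfl⟩
  | add x z _ _ ihx ihz =>
    obtain ⟨b, hb, hxb⟩ := ihx
    obtain ⟨c, hc, hzc⟩ := ihz
    rcases le_total (v b) (v c) with hbc | hcb
    · exact ⟨c, hc, v.map_add_le (hxb.trans hbc) hzc⟩
    · exact ⟨b, hb, v.map_add_le hxb (hzc.trans hcb)⟩
  | neg x _ ih => simpa using ih
  | mul x z _ _ ihx ihz =>
    obtain ⟨b, hb, hxb⟩ := ihx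
    obtain ⟨c, hc, hzc⟩ := ihz
    exact ⟨b * c, w.integer.mul_mem hb hc, by simpa only [map_mul] using mul_le_mul' hxb hzc⟩

theorem closure_integer_union_eq_top_iff :
    Subring.closure ((v.integer : Set F) ∪ (w.integer : Set F)) = ⊤ ↔
      ∀ z : F, ∃ b ∈ w.integer, v z ≤ v b := by
  refine ⟨fun h z ↦ v.exists_mem_integer_le_of_mem_closure w (h ▸ Subring.mem_top z),
    fun h ↦ eq_top_iff.2 fun z _ ↦ ?_⟩
  rcases eq_or_ne z 0 with rfl | hz
  · exact zero_mem _
  obtain ⟨b, hb, hzb⟩ := h z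
  have hvb : 0 < v b := (v.pos_iff.2 hz).trans_le hzb
  have hb0 : b ≠ 0 := v.pos_iff.1 hvb
  have hzb' : z * b⁻¹ ∈ v.integer := by
    rw [mem_integer_iff, map_mul, map_inv₀, ← div_eq_mul_inv]
    exact (div_le_one₀ hvb).2 hzb
  rw [← inv_mul_cancel_right₀ hb0 z]
  exact Subring.mul_mem _ (Subring.subset_closure (.inl hzb')) (Subring.subset_closure (.inr hb))

end Domination

section Comap

variable {K L : Type*} [Field K] [Field L] {Γ₁ Γ₂ : Type*}
  [LinearOrderedCommGroupWithZero Γ₁] [LinearOrderedCommGroupWithZero Γ₂]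
  (f : K →+* L) {v : Valuation L Γ₁} {w : Valuation L Γ₂}

theorem exists_ne_one_of_comap (h : ∃ x : K, x ≠ 0 ∧ v.comap f x ≠ 1) :
    ∃ x : L, x ≠ 0 ∧ v x ≠ 1 := by
  obtain ⟨x, hx0, hx1⟩ := h
  exact ⟨f x, (map_ne_zero f).2 hx0, hx1⟩

theorem forall_exists_mem_integer_le_of_comap
    (hcof : ∀ x : L, x ≠ 0 → ∃ y : K, y ≠ 0 ∧ v (f y) ≤ v x)
    (h : ∀ z : K, ∃ b ∈ (w.comap f).integer, v.comap f z ≤ v.comap f b) :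
    ∀ z : L, ∃ b ∈ w.integer, v z ≤ v b := by
  intro z
  rcases eq_or_ne z 0 with rfl | hz
  · exact ⟨0, w.integer.zero_mem, le_rfl⟩
  obtain ⟨y, hy0, hyz⟩ := hcof z⁻¹ (inv_ne_zero hz)
  obtain ⟨b, hb, hyb⟩ := h y⁻¹
  refine ⟨f b, hb, ?_⟩
  calc v z = (v z⁻¹)⁻¹ := by rw [map_inv₀, inv_inv]
    _ ≤ (v (f y))⁻¹ := inv_anti₀ (v.pos_iff.2 ((map_ne_zero f).2 hy0)) hyz
    _ = v (f y⁻¹) := by rw [map_inv₀, map_inv₀]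
    _ ≤ v (f b) := hyb

theorem IndependentVal.of_comap (hcof : ∀ x : L, x ≠ 0 → ∃ y : K, y ≠ 0 ∧ v (f y) ≤ v x)
    (h : (v.comap f).IndependentVal (w.comap f)) : v.IndependentVal w := by
  obtain ⟨hv, hw, hcl⟩ := h
  refine ⟨exists_ne_one_of_comap f hv, exists_ne_one_of_comap f hw, ?_⟩
  rw [closure_integer_union_eq_top_iff] at hcl ⊢
  exact forall_exists_mem_integer_le_of_comap f hcof hcl

end Comap

end Valuation

theorem stmt6 {F F' : Type*} [Field F] [Field F'] [Algebra F F'] {n : ℕ}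
    {Γ : Fin n → Type*} [∀ i, LinearOrderedCommGroupWithZero (Γ i)]
    (v' : ∀ i, Valuation F' (Γ i))
    -- the restrictions to `F`:
    (v : ∀ i, Valuation F (Γ i)) (hres : ∀ i, v i = (v' i).comap (algebraMap F F'))
    -- pairwise independence of the restrictions:
    (hindep : ∀ i j, i ≠ j → (v i).IndependentVal (v j))
    -- each value group `Γ_{v i}` is cofinal in `Γ_{v' i}` (additively `δ ≥ γ`;
    -- multiplicatively `v' (algebraMap y) ≤ v' x`):
    (hcof : ∀ i, ∀ x : F', x ≠ 0 → ∃ y : F, y ≠ 0 ∧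
      v' i (algebraMap F F' y) ≤ v' i x) :
    ∀ i j, i ≠ j → (v' i).IndependentVal (v' j) := by
  obtain rfl : v = fun i ↦ (v' i).comap (algebraMap F F') := funext hres
  intro i j hij
  exact (hindep i j hij).of_comap (algebraMap F F') (hcof i)
end

section
/- Let L/K be a finite Galois extension with group B = Gal(L/K), let β : A → B be an epimorphism of finite groups, regard the elements of A as indeterminates over L, and let A act on the rational function field L(A) via group multiplication on the set A of indeterminates and via the Galois action of β(A) = B on L. If D ≤ A is a subgroup with D ∩ ker β = {1}, then the fixed field L(A)^D is a purely transcendental extension of L^{β(D)}. -/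
/-!
Write `L' = L^{β(D)}`. As `D ∩ ker β = 1`, the group `D` acts faithfully on `L`, so by Artin
`[L : L'] = |D|`; pick an `L'`-basis `(b_e)_{e ∈ D}` of `L`. By Dedekind's independence of
characters the matrix `(d(b_e))_{d,e}` is invertible. Left multiplication makes `A` a free
`D`-set, `A ≅ D × D\A`; choosing representatives `a_q` of the orbits `q`, the elements
`y_{e,q} = ∑_d d(b_e) X_{d a_q}` arise from an invertible `L`-linear change of the variables
`X_a`. Hence the `y` are algebraically independent and generate `L(A)` together with `L`. They
are `D`-invariant, so `F = L'(y) ⊆ L(A)^D`, while `L(A) = F·L` has degree at most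
`[L : L'] = |D| = [L(A) : L(A)^D]` over `F`; thus `F = L(A)^D`.
-/

/-- The fixed subfield of a subgroup `D` of a group `G` acting on a field `F` by ring
automorphisms. -/
def fixedSubfield (G : Type*) [Group G] (F : Type*) [Field F] [MulSemiringAction G F]
    (D : Subgroup G) : Subfield F where
  carrier := {x | ∀ σ ∈ D, σ • x = x}
  mul_mem' := by intro a b ha hb σ hσ; rw [smul_mul', ha σ hσ, hb σ hσ]
  one_mem' := by intro σ hσ; rw [smul_one]
  add_mem' := by intro a b ha hb σ hσ; rw [smul_add, ha σ hσ, hb σ hσ]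
  neg_mem' := by intro a ha σ hσ; rw [smul_neg, ha σ hσ]
  zero_mem' := by intro σ hσ; rw [smul_zero]
  inv_mem' := by intro a ha σ hσ; rw [smul_inv'', ha σ hσ]

open Module MvPolynomial

theorem isUnit_matrix_smul_basis {G L : Type*} [Group G] [Fintype G] [DecidableEq G] [Field L]
    [MulSemiringAction G L] [FaithfulSMul G L] (b : Basis G (FixedPoints.subfield G L) L) :
    IsUnit (Matrix.of fun (g : G) i => g • b i) := by
  rw [← Matrix.linearIndependent_rows_iff_isUnit]
  exact ((linearIndependent_toLinearMap _ L L).comp _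
    (MulSemiringAction.toAlgHom_injective _ L)).map' (b.constr L).symm.toLinearMap
    (b.constr L).symm.ker

namespace MvPolynomial

variable {R n m : Type*} [CommSemiring R] [Fintype n]

noncomputable def linearSubst (M : Matrix n n R) (p : n × m) : MvPolynomial (n × m) R :=
  ∑ i, C (M i p.1) * X (i, p.2)

theorem aeval_linearSubst_linearSubst (M N : Matrix n n R) (p : n × m) :
    aeval (linearSubst M) (linearSubst N p) = linearSubst (M * N) p := by
  simp only [linearSubst, map_sum, map_mul, aeval_C, aeval_X, algebraMap_eq, Finset.mul_sum,
    Matrix.mul_apply, map_sum, Finset.sum_mul]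
  rw [Finset.sum_comm]
  exact Finset.sum_congr rfl fun i _ => Finset.sum_congr rfl fun j _ => by ring

theorem linearSubst_one [DecidableEq n] : linearSubst (1 : Matrix n n R) = (X : n × m → _) := by
  funext p
  simp [linearSubst, Matrix.one_apply]

noncomputable def linearSubstEquiv [DecidableEq n] (M : (Matrix n n R)ˣ) :
    MvPolynomial (n × m) R ≃ₐ[R] MvPolynomial (n × m) R :=
  AlgEquiv.ofAlgHom (aeval (linearSubst ↑M)) (aeval (linearSubst ↑M⁻¹))
    (algHom_ext fun p => by
      rw [AlgHom.comp_apply, aeval_X, aeval_linearSubst_linearSubst, Units.mul_inv,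
        linearSubst_one, AlgHom.id_apply])
    (algHom_ext fun p => by
      rw [AlgHom.comp_apply, aeval_X, aeval_linearSubst_linearSubst, Units.inv_mul,
        linearSubst_one, AlgHom.id_apply])

theorem linearSubstEquiv_X [DecidableEq n] (M : (Matrix n n R)ˣ) (p : n × m) :
    linearSubstEquiv M (X p) = linearSubst (↑M) p :=
  aeval_X _ _

end MvPolynomial

namespace MulAction

variable {G X : Type*} [Group G] [MulAction G X]

noncomputable def prodOrbitsEquivOfFree (hfree : ∀ (g : G) (x : X), g • x = x → g = 1) :
    G × orbitRel.Quotient G X ≃ X :=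
  Equiv.ofBijective (fun p => p.1 • p.2.out) <| by
    have hmk : ∀ (g : G) (q : orbitRel.Quotient G X), (⟦g • q.out⟧ : orbitRel.Quotient G X) = q :=
      fun g q => (Quotient.sound (mem_orbit q.out g)).trans q.out_eq
    constructor
    · rintro ⟨g, q⟩ ⟨h, r⟩ hgh
      obtain rfl : q = r := by rw [← hmk g q, ← hmk h r]; exact congrArg _ hgh
      have := hfree _ _ ((mul_smul _ _ _).trans (inv_smul_eq_iff.mpr hgh.symm))
      exact Prod.ext (inv_mul_eq_one.mp this) rfl
    · intro x
      obtain ⟨g, hg⟩ := Quotient.mk_out (s := orbitRel G X) x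
      exact ⟨(g⁻¹, ⟦x⟧), inv_smul_eq_iff.mpr hg.symm⟩

theorem prodOrbitsEquivOfFree_apply (hfree : ∀ (g : G) (x : X), g • x = x → g = 1)
    (p : G × orbitRel.Quotient G X) : prodOrbitsEquivOfFree hfree p = p.1 • p.2.out := rfl

end MulAction

theorem FixedPoints.subfield_eq_of_le_of_rank_le {G Ω : Type*} [Group G] [Fintype G] [Field Ω]
    [MulSemiringAction G Ω] [FaithfulSMul G Ω] (F : Subfield Ω)
    (hF : F ≤ FixedPoints.subfield G Ω) (hrank : Module.rank F Ω ≤ Fintype.card G) :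
    F = FixedPoints.subfield G Ω := by
  have : FiniteDimensional F Ω :=
    Module.rank_lt_aleph0_iff.mp (hrank.trans_lt (Cardinal.natCast_lt_aleph0))
  have hbot : (⊥ : IntermediateField F Ω) = Subfield.extendScalars hF := by
    refine IntermediateField.eq_of_le_of_finrank_le' bot_le ?_
    rw [IntermediateField.finrank_bot']
    exact (finrank_le_of_rank_le hrank).trans (FixedPoints.finrank_eq_card G Ω).ge
  refine le_antisymm hF fun x hx => ?_
  obtain ⟨c, rfl⟩ := IntermediateField.mem_bot.mp (hbot ▸ hx : x ∈ (⊥ : IntermediateField F Ω))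
  exact c.2

section PolynomialFunctionField

variable {τ L Ω : Type*} [Field L] [Field Ω] [Algebra (MvPolynomial τ L) Ω]

local notation "φ" => algebraMap (MvPolynomial τ L) Ω
local notation "ι" => RingHom.comp (algebraMap (MvPolynomial τ L) Ω) (C : L →+* MvPolynomial τ L)

variable {G : Type*} [Group G] [MulSemiringAction G L] [MulSemiringAction G Ω]

theorem map_fixedPoints_le_fixedPoints (hC : ∀ (g : G) c, g • ι c = ι (g • c)) :
    (FixedPoints.subfield G L).map ι ≤ FixedPoints.subfield G Ω := by
  rintro _ ⟨c, hc, rfl⟩ g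
  rw [hC, hc g]

theorem faithfulSMul_of_smul_algebraMap_C [FaithfulSMul G L]
    (hC : ∀ (g : G) c, g • ι c = ι (g • c)) : FaithfulSMul G Ω :=
  ⟨fun h => eq_of_smul_eq_smul fun c => (ι).injective <| by rw [← hC, ← hC, h]⟩

theorem sum_smul_mul_X_mem_fixedPoints [Fintype G] [MulAction G τ]
    (hX : ∀ (g : G) a, g • φ (X a) = φ (X (g • a))) (hC : ∀ (g : G) c, g • ι c = ι (g • c))
    (c : L) (a : τ) : ∑ g : G, ι (g • c) * φ (X (g • a)) ∈ FixedPoints.subfield G Ω := by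
  intro h
  simp only [Finset.smul_sum, smul_mul', hC, hX, smul_smul]
  exact Fintype.sum_equiv (Equiv.mulLeft h) _ _ fun g => rfl

section FractionRing

variable {σ : Type*} [IsFractionRing (MvPolynomial τ L) Ω]

theorem algebraicIndependent_algebraMap_algEquiv_X (Θ : MvPolynomial σ L ≃ₐ[L] MvPolynomial τ L)
    (K : Subfield L) : AlgebraicIndependent (K.map ι) fun i => φ (Θ (X i)) := by
  have hK : AlgebraicIndependent K (Θ.toAlgHom ∘ X) :=
    ((algebraicIndependent_X σ L).map' (f := Θ.toAlgHom) Θ.injective).restrictScalars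
      (algebraMap K L).injective
  let f : K →+* K.map ι := (RingHom.comp ι K.subtype).codRestrict _ fun c => ⟨c, c.2, rfl⟩
  have hf : Function.Surjective f := by
    rintro ⟨_, c, hc, rfl⟩
    exact ⟨⟨c, hc⟩, rfl⟩
  have hcomm :
      (algebraMap (K.map ι) Ω).comp f = RingHom.comp φ (algebraMap K (MvPolynomial τ L)) := by
    ext c
    rfl
  exact hK.ringHom_of_comp_eq f φ hf (IsFractionRing.injective _ _) hcomm

theorem subfield_eq_top_of_algEquiv (Θ : MvPolynomial σ L ≃ₐ[L] MvPolynomial τ L) (S : Subfield Ω)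
    (hL : ∀ c, ι c ∈ S) (hy : ∀ i, φ (Θ (X i)) ∈ S) : S = ⊤ := by
  have hΘ : ∀ Q, φ (Θ Q) ∈ S := by
    intro Q
    induction Q using MvPolynomial.induction_on with
    | C c => rw [show Θ (C c) = C c from Θ.commutes c]; exact hL c
    | add p q hp hq => simpa using add_mem hp hq
    | mul_X p i hp => simpa using mul_mem hp (hy i)
  rw [eq_top_iff, ← IsFractionRing.closure_range_algebraMap (MvPolynomial τ L) Ω,
    Subfield.closure_le]
  rintro _ ⟨P, rfl⟩
  exact Θ.apply_symm_apply P ▸ hΘ _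

theorem rank_le_finrank_of_algEquiv (Θ : MvPolynomial σ L ≃ₐ[L] MvPolynomial τ L) (K : Subfield L)
    [FiniteDimensional K L] (F : IntermediateField (K.map ι) Ω) (hy : ∀ i, φ (Θ (X i)) ∈ F) :
    Module.rank F Ω ≤ finrank K L := by
  have hle : K.map ι ≤ (ι).fieldRange := by
    rintro _ ⟨c, -, rfl⟩
    exact ⟨c, rfl⟩
  let Lι := Subfield.extendScalars hle
  have hfinrank : finrank K L = finrank (K.map ι) Lι := by
    refine Algebra.finrank_eq_of_equiv_equiv (K.toSubring.equivMapOfInjective _ (ι).injective)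
      (ι).rangeRestrictFieldEquiv ?_
    ext
    rfl
  have : FiniteDimensional (K.map ι) Lι := Module.finite_of_finrank_pos (hfinrank ▸ finrank_pos)
  have htop : IntermediateField.adjoin F (Lι : Set Ω) = ⊤ := by
    refine IntermediateField.toSubfield_injective (subfield_eq_top_of_algEquiv Θ _ ?_ ?_)
    · exact fun c => IntermediateField.subset_adjoin F _ ⟨c, rfl⟩
    · exact fun i => (IntermediateField.adjoin F _).algebraMap_mem ⟨_, hy i⟩
  calc Module.rank F Ω = Module.rank F (IntermediateField.adjoin F (Lι : Set Ω)) := by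
        rw [htop, IntermediateField.rank_top']
    _ ≤ Module.rank (K.map ι) Lι := IntermediateField.adjoin_rank_le_of_isAlgebraic_right F Lι
    _ = finrank K L := by rw [hfinrank, finrank_eq_rank]

theorem exists_algebraicIndependent_adjoin_eq_fixedPoints [Fintype G] [MulAction G τ]
    [FaithfulSMul G L] (hfree : ∀ (g : G) (a : τ), g • a = a → g = 1)
    (hX : ∀ (g : G) a, g • φ (X a) = φ (X (g • a))) (hC : ∀ (g : G) c, g • ι c = ι (g • c)) :
    ∃ S : Set Ω, AlgebraicIndependent ((FixedPoints.subfield G L).map ι) ((↑) : S → Ω) ∧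
      (IntermediateField.adjoin ((FixedPoints.subfield G L).map ι) S).toSubfield =
        FixedPoints.subfield G Ω := by
  classical
  let b : Basis G (FixedPoints.subfield G L) L :=
    (finBasisOfFinrankEq _ _ (FixedPoints.finrank_eq_card G L)).reindex (Fintype.equivFin G).symm
  let Θ := (linearSubstEquiv (isUnit_matrix_smul_basis b).unit).trans
    (renameEquiv L (MulAction.prodOrbitsEquivOfFree hfree))
  have hΘ : ∀ p, φ (Θ (X p)) = ∑ g : G, ι (g • b p.1) * φ (X (g • p.2.out)) := by
    intro p
    simp [Θ, linearSubstEquiv_X, linearSubst, MulAction.prodOrbitsEquivOfFree_apply]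
  have := faithfulSMul_of_smul_algebraMap_C hC
  refine ⟨Set.range fun p => φ (Θ (X p)),
    (algebraicIndependent_algebraMap_algEquiv_X Θ _).coe_range, ?_⟩
  set F := IntermediateField.adjoin ((FixedPoints.subfield G L).map ι)
    (Set.range fun p => φ (Θ (X p)))
  have hle : F.toSubfield ≤ FixedPoints.subfield G Ω := by
    refine (IntermediateField.adjoin_le_iff (T := Subfield.extendScalars
      (map_fixedPoints_le_fixedPoints hC))).mpr ?_
    rintro _ ⟨p, rfl⟩
    change φ (Θ (X p)) ∈ FixedPoints.subfield G Ω
    rw [hΘ]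
    exact sum_smul_mul_X_mem_fixedPoints hX hC _ _
  refine FixedPoints.subfield_eq_of_le_of_rank_le _ hle ?_
  have := rank_le_finrank_of_algEquiv Θ _ F fun p => IntermediateField.subset_adjoin _ _ ⟨p, rfl⟩
  rwa [FixedPoints.finrank_eq_card] at this

end FractionRing

end PolynomialFunctionField

theorem stmt12_general {K L : Type} [Field K] [Field L] [Algebra K L]
    (A : Type) [Group A] [Finite A]
    -- `β : A ↠ B = Gal(L/K)`:
    (β : A →* (L ≃ₐ[K] L))
    (D : Subgroup A) (hD : D ⊓ β.ker = ⊥)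
    -- `Ω = L(A)`, the rational function field over `L` in indeterminates indexed by `A`:
    (Ω : Type) [Field Ω] [Algebra (MvPolynomial A L) Ω] [IsFractionRing (MvPolynomial A L) Ω]
    -- with the `A`-action permuting the indeterminates by left multiplication and acting
    -- on coefficients through `β`:
    [MulSemiringAction A Ω]
    (hX : ∀ σ a : A,
      σ • (algebraMap (MvPolynomial A L) Ω (MvPolynomial.X a)) =
        algebraMap (MvPolynomial A L) Ω (MvPolynomial.X (σ * a)))
    (hC : ∀ σ : A, ∀ c : L,
      σ • (algebraMap (MvPolynomial A L) Ω (MvPolynomial.C c)) =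
        algebraMap (MvPolynomial A L) Ω (MvPolynomial.C (β σ c))) :
    -- then `L(A)^D` is purely transcendental over (the image in `Ω` of) `L^{β(D)}`:
    ∃ S : Set Ω,
      AlgebraicIndependent
        ↥((fixedSubfield (L ≃ₐ[K] L) L (D.map β)).map
          ((algebraMap (MvPolynomial A L) Ω).comp (MvPolynomial.C)))
        (fun s : S => (s : Ω)) ∧
      ∀ x : Ω,
        (∀ σ ∈ D, σ • x = x) ↔
          x ∈ IntermediateField.adjoin
            ↥((fixedSubfield (L ≃ₐ[K] L) L (D.map β)).map
              ((algebraMap (MvPolynomial A L) Ω).comp (MvPolynomial.C))) S := by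
  have := Fintype.ofFinite D
  let _ : MulSemiringAction D L := MulSemiringAction.compHom L (β.domRestrict D)
  have : FaithfulSMul D L := ⟨fun h => (MonoidHom.ker_eq_bot_iff _).mp
    (by rw [MonoidHom.ker_domRestrict, Subgroup.subgroupOf_eq_bot, disjoint_iff, inf_comm, hD])
    (AlgEquiv.ext h)⟩
  have hfixed : fixedSubfield (L ≃ₐ[K] L) L (D.map β) = FixedPoints.subfield D L := by
    ext c
    change (∀ σ ∈ D.map β, σ c = c) ↔ ∀ g : D, β g c = c
    refine ⟨fun h g => h _ (Subgroup.mem_map_of_mem β g.2), ?_⟩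
    rintro h _ ⟨a, ha, rfl⟩
    exact h ⟨a, ha⟩
  obtain ⟨S, hS, hSΩ⟩ := exists_algebraicIndependent_adjoin_eq_fixedPoints (G := D) (τ := A)
    (fun g a h => Subtype.ext (mul_eq_right.mp h)) (fun g a => hX g a) (fun g c => hC g c)
  rw [hfixed]
  refine ⟨S, hS, fun x => ?_⟩
  rw [← IntermediateField.mem_toSubfield, hSΩ]
  exact ⟨fun h g => h g g.2, fun h g hg => h ⟨g, hg⟩⟩

set_option maxHeartbeats 1000000 in
theorem stmt12 {K L : Type} [Field K] [Field L] [Algebra K L]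
    [FiniteDimensional K L] [IsGalois K L]
    (A : Type) [Group A] [Finite A]
    -- `β : A ↠ B = Gal(L/K)`:
    (β : A →* (L ≃ₐ[K] L)) (hβ : Function.Surjective β)
    (D : Subgroup A) (hD : D ⊓ β.ker = ⊥)
    -- `Ω = L(A)`, the rational function field over `L` in indeterminates indexed by `A`:
    (Ω : Type) [Field Ω] [Algebra (MvPolynomial A L) Ω] [IsFractionRing (MvPolynomial A L) Ω]
    -- with the `A`-action permuting the indeterminates by left multiplication and acting
    -- on coefficients through `β`:
    [MulSemiringAction A Ω]
    (hX : ∀ σ a : A,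
      σ • (algebraMap (MvPolynomial A L) Ω (MvPolynomial.X a)) =
        algebraMap (MvPolynomial A L) Ω (MvPolynomial.X (σ * a)))
    (hC : ∀ σ : A, ∀ c : L,
      σ • (algebraMap (MvPolynomial A L) Ω (MvPolynomial.C c)) =
        algebraMap (MvPolynomial A L) Ω (MvPolynomial.C (β σ c))) :
    -- then `L(A)^D` is purely transcendental over (the image in `Ω` of) `L^{β(D)}`:
    ∃ S : Set Ω,
      AlgebraicIndependent
        ↥((fixedSubfield (L ≃ₐ[K] L) L (D.map β)).map
          ((algebraMap (MvPolynomial A L) Ω).comp (MvPolynomial.C)))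
        (fun s : S => (s : Ω)) ∧
      ∀ x : Ω,
        (∀ σ ∈ D, σ • x = x) ↔
          x ∈ IntermediateField.adjoin
            ↥((fixedSubfield (L ≃ₐ[K] L) L (D.map β)).map
              ((algebraMap (MvPolynomial A L) Ω).comp (MvPolynomial.C))) S :=
  stmt12_general A β D hD Ω hX hC
end

section
/- Let F be a field, f_c ∈ F[X] a monic polynomial of degree d, and suppose the F-algebra L' = F[X]/(f_c) contains d elements x₁, …, x_d which are roots of f_c and such that ∏_{k ≠ l}(x_k − x_l) is a unit in L'. Then f_c is separable, and for every monic irreducible factor f of f_c over F, the field L = F[X]/(f) is a splitting field of f_c over F; in particular L/F is a Galois extension and all irreducible factors of f_c generate the same extension. -/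
/-!
An `F`-algebra map `π` from `F[X]/(f_c)` to a field `L` sends the `d` roots `xₖ` to roots of
`f_c` in `L`, pairwise distinct because `π` maps the unit `∏_{k ≠ l} (xₖ - xₗ)` to a unit.
A polynomial of degree `d` with `d` distinct roots in `L` splits over `L` with simple roots, so
`f_c` is separable. For an irreducible factor `f`, take `L = F[X]/(f)` and `π` the canonical
projection: `f_c` splits in `L`, and `L` is generated by `root f`, itself a root of `f_c`.
-/

open Polynomial

theorem injective_of_isUnit_prod_offDiag_sub {R ι : Type*} [CommRing R] [Nontrivial R]
    [Fintype ι] [DecidableEq ι] {x : ι → R}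
    (hunit : IsUnit (∏ p ∈ Finset.univ.offDiag, (x p.1 - x p.2))) : Function.Injective x := by
  intro k l hkl
  by_contra hne
  have hmem : (k, l) ∈ Finset.univ.offDiag := by simp [hne]
  rw [Finset.prod_eq_zero (f := fun p => x p.1 - x p.2) hmem (sub_eq_zero.2 hkl)] at hunit
  exact not_isUnit_zero hunit

namespace Polynomial

theorem roots_eq_of_card_eq_natDegree {R : Type*} [CommRing R] [IsDomain R] {p : R[X]}
    (hp : p ≠ 0) {s : Finset R} (hroot : ∀ a ∈ s, p.IsRoot a) (hcard : s.card = p.natDegree) :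
    p.roots = s.val := by
  have hle : s.val ≤ p.roots :=
    (Multiset.le_iff_subset s.nodup).2 fun a ha => (mem_roots hp).2 (hroot a ha)
  exact (Multiset.eq_of_le_of_card_le hle ((card_roots' p).trans hcard.ge)).symm

theorem splits_and_separable_of_card_roots {K : Type*} [Field K] {p : K[X]} (hp : p ≠ 0)
    {s : Finset K} (hroot : ∀ a ∈ s, p.IsRoot a) (hcard : s.card = p.natDegree) :
    p.Splits ∧ p.Separable := by
  have hroots := roots_eq_of_card_eq_natDegree hp hroot hcard
  have hsplits : p.Splits := splits_iff_card_roots.2 (by rw [hroots, ← hcard]; rfl)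
  refine ⟨hsplits, (nodup_roots_iff_of_splits hp hsplits).1 ?_⟩
  rw [hroots]
  exact s.nodup

end Polynomial

section

variable {F A L ι : Type*} [Field F] [CommRing A] [Algebra F A] [Field L] [Algebra F L]
  [Fintype ι] [DecidableEq ι]

theorem splits_and_separable_of_isUnit_prod_offDiag_sub {fc : F[X]} (hfc : fc ≠ 0)
    (hcard : Fintype.card ι = fc.natDegree) (x : ι → A) (hroot : ∀ k, aeval (x k) fc = 0)
    (hunit : IsUnit (∏ p ∈ Finset.univ.offDiag, (x p.1 - x p.2))) (π : A →ₐ[F] L) :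
    (fc.map (algebraMap F L)).Splits ∧ fc.Separable := by
  classical
  have hinj : Function.Injective (π ∘ x) := injective_of_isUnit_prod_offDiag_sub <| by
    simpa only [map_prod, map_sub, Function.comp_apply] using hunit.map π
  have hroot' : ∀ a ∈ Finset.univ.image (π ∘ x), (fc.map (algebraMap F L)).IsRoot a := by
    simp only [Finset.mem_image, Finset.mem_univ, true_and, forall_exists_index]
    rintro _ k rfl
    rw [IsRoot, eval_map_algebraMap, Function.comp_apply, aeval_algHom_apply, hroot k, map_zero]
  have hcard' : (Finset.univ.image (π ∘ x)).card = (fc.map (algebraMap F L)).natDegree := by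
    rw [Finset.card_image_of_injective _ hinj, natDegree_map, Finset.card_univ, hcard]
  obtain ⟨hsplits, hsep⟩ :=
    splits_and_separable_of_card_roots (map_ne_zero hfc) hroot' hcard'
  exact ⟨hsplits, (separable_map _).1 hsep⟩

end

theorem AdjoinRoot.isSplittingField_of_dvd {F : Type*} [Field F] {f p : F[X]}
    [Fact (Irreducible f)] (hp : p ≠ 0) (hfp : f ∣ p)
    (hsplits : (p.map (algebraMap F (AdjoinRoot f))).Splits) :
    IsSplittingField F (AdjoinRoot f) p := by
  refine ⟨hsplits, eq_top_iff.2 ?_⟩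
  rw [← AdjoinRoot.adjoinRoot_eq_top]
  refine Algebra.adjoin_mono (Set.singleton_subset_iff.2 ((mem_rootSet_of_ne hp).2 ?_))
  rw [AdjoinRoot.aeval_eq, AdjoinRoot.mk_eq_zero]
  exact hfp

theorem stmt17 {F : Type*} [Field F] (fc : Polynomial F) {d : ℕ}
    (hd : fc.natDegree = d) (hmonic : fc.Monic)
    -- `L' = F[X]/(f_c)` contains `d` roots of `f_c` whose pairwise differences have
    -- an invertible product:
    (x : Fin d → AdjoinRoot fc)
    (hroot : ∀ k, Polynomial.aeval (x k) fc = 0)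
    (hunit : IsUnit (∏ p ∈ Finset.univ.offDiag, (x p.1 - x p.2))) :
    -- then `f_c` is separable, and for every monic irreducible factor `f` of `f_c`,
    -- `F[X]/(f)` is a splitting field of `f_c` over `F`; in particular it is a Galois
    -- extension of `F` (so all irreducible factors generate the same extension):
    fc.Separable ∧
      ∀ f : Polynomial F, f.Monic → ∀ hf : Irreducible f, f ∣ fc →
        letI : Fact (Irreducible f) := ⟨hf⟩
        Polynomial.IsSplittingField F (AdjoinRoot f) fc ∧ IsGalois F (AdjoinRoot f) := by
  have hfc := hmonic.ne_zero
  have key : ∀ (f : F[X]) [Fact (Irreducible f)], f ∣ fc →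
      (fc.map (algebraMap F (AdjoinRoot f))).Splits ∧ fc.Separable := fun f _ hf =>
    splits_and_separable_of_isUnit_prod_offDiag_sub hfc (by rw [Fintype.card_fin, hd]) x hroot
      hunit (AdjoinRoot.algHomOfDvd F fc f hf)
  have hsep : fc.Separable := by
    by_cases h0 : fc.natDegree = 0
    · rw [hmonic.natDegree_eq_zero.1 h0]
      exact separable_one
    · have := Fact.mk (irreducible_factor fc)
      exact (key _ (factor_dvd_of_natDegree_ne_zero h0)).2
  refine ⟨hsep, fun f _ hf hdvd => ?_⟩
  have : Fact (Irreducible f) := ⟨hf⟩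
  have hsf := AdjoinRoot.isSplittingField_of_dvd hfc hdvd (key f hdvd).1
  exact ⟨hsf, IsGalois.of_separable_splitting_field hsep⟩
end
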